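/- arXiv:1911.08919 — 3 statements merged into one kernel-verified Lean document; each statement's English description precedes it below -/
import Mathlib

section
/- If A, B ∈ ℂ satisfy Re(A · conj(B)) ≤ 0, then the ramification point 0 lies metrically between A and B: dLE(A, 0) + dLE(0, B) = dLE(A, B); consequently every geodesic from A to B passes through 0, i.e., for any geodesic γ from A to B there exists t ∈ [0, dLE(A,B)] with γ(t) = 0. (The geodesic is a broken line formed by two euclidean segments meeting at the ramification point.) -/
open Complex Set

/-- A path `γ : [0,1] → ℂ` is piecewise C¹: continuous on `[0,1]` and C¹ on the
pieces of a finite partition `0 = s 0 < s 1 < ⋯ < s n = 1`. -/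
def PiecewiseC1 (γ : ℝ → ℂ) : Prop :=
  ContinuousOn γ (Set.Icc 0 1) ∧
    ∃ (n : ℕ) (s : Fin (n + 1) → ℝ), StrictMono s ∧ s 0 = 0 ∧ s (Fin.last n) = 1 ∧
      ∀ i : Fin n, ContDiffOn ℝ 1 γ (Set.Icc (s i.castSucc) (s i.succ))

/-- The log-euclidean length of a path: the euclidean length of `t ↦ γ(t)²`. -/
noncomputable def LELength (γ : ℝ → ℂ) : ℝ :=
  ∫ t in (0:ℝ)..1, 2 * ‖γ t‖ * ‖deriv γ t‖

/-- The log-euclidean distance: infimum of log-euclidean lengths of piecewise C¹ paths. -/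
noncomputable def dLE (A B : ℂ) : ℝ :=
  sInf {L : ℝ | ∃ γ : ℝ → ℂ, PiecewiseC1 γ ∧ γ 0 = A ∧ γ 1 = B ∧ LELength γ = L}

/-- A geodesic from `A` to `B` in the log-euclidean plane. -/
def IsLEGeodesic (A B : ℂ) (γ : ℝ → ℂ) : Prop :=
  γ 0 = A ∧ γ (dLE A B) = B ∧
    ∀ s ∈ Set.Icc (0:ℝ) (dLE A B), ∀ t ∈ Set.Icc (0:ℝ) (dLE A B),
      dLE (γ s) (γ t) = |s - t|

noncomputable section LEProofAux
open MeasureTheory intervalIntegral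

private lemma integral_congr_Ioo' {f g : ℝ → ℝ} {a b : ℝ} (hab : a ≤ b)
    (h : ∀ x ∈ Set.Ioo a b, f x = g x) :
    ∫ x in a..b, f x = ∫ x in a..b, g x := by
  apply intervalIntegral.integral_congr_ae
  have hb' : ∀ᵐ x : ℝ, x ≠ b := by
    refine MeasureTheory.ae_iff.mpr ?_
    simp
  filter_upwards [hb'] with x hx hmem
  rw [Set.uIoc_of_le hab] at hmem
  exact h x ⟨hmem.1, lt_of_le_of_ne hmem.2 hx⟩

private lemma intervalIntegrable_congr_Ioo' {f g : ℝ → ℝ} {a b : ℝ} (hab : a ≤ b)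
    (h : ∀ x ∈ Set.Ioo a b, f x = g x) (hg : IntervalIntegrable g volume a b) :
    IntervalIntegrable f volume a b := by
  rw [intervalIntegrable_iff_integrableOn_Ioc_of_le hab] at hg ⊢
  apply hg.congr
  have hb' : ∀ᵐ x : ℝ, x ≠ b := by
    refine MeasureTheory.ae_iff.mpr ?_
    simp
  filter_upwards [MeasureTheory.ae_restrict_mem measurableSet_Ioc,
    MeasureTheory.ae_restrict_of_ae hb'] with x hx hxb
  exact (h x ⟨hx.1, lt_of_le_of_ne hx.2 hxb⟩).symm

private lemma hasDerivAt_maxsq (x : ℝ) :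
    HasDerivAt (fun x : ℝ => max x 0 ^ 2) (2 * max x 0) x := by
  rcases lt_trichotomy x 0 with hx | rfl | hx
  · have h : (fun x : ℝ => max x 0 ^ 2) =ᶠ[nhds x] fun _ => (0 : ℝ) := by
      filter_upwards [Iio_mem_nhds hx] with y hy
      simp [max_eq_right (le_of_lt (mem_Iio.mp hy))]
    rw [max_eq_right hx.le, mul_zero]
    exact (hasDerivAt_const x (0 : ℝ)).congr_of_eventuallyEq h
  · rw [max_self, mul_zero]
    rw [hasDerivAt_iff_isLittleO]
    rw [Asymptotics.isLittleO_iff]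
    intro c hc
    filter_upwards [Metric.ball_mem_nhds (0 : ℝ) hc] with y hy
    have h1 : |max y 0| ≤ |y| := by
      rcases le_or_gt y 0 with h | h
      · simp [max_eq_right h]
      · simp [max_eq_left h.le]
    have h2 : |y| < c := by simpa [Real.dist_eq] using hy
    calc ‖max y 0 ^ 2 - max 0 0 ^ 2 - (y - 0) • (0:ℝ)‖ = |max y 0| ^ 2 := by
          simp [_root_.abs_pow, _root_.sq_abs]
      _ ≤ c * |y| := by
          rw [sq]
          exact mul_le_mul (h1.trans h2.le) h1 (abs_nonneg _) (le_of_lt hc)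
      _ = c * ‖y - 0‖ := by simp
  · have h : (fun x : ℝ => max x 0 ^ 2) =ᶠ[nhds x] fun y => y ^ 2 := by
      filter_upwards [Ioi_mem_nhds hx] with y hy
      simp [max_eq_left (le_of_lt (mem_Ioi.mp hy))]
    rw [max_eq_left hx.le]
    have h2 := (hasDerivAt_pow 2 x).congr_of_eventuallyEq h
    simpa using h2

private lemma contDiff_maxsq : ContDiff ℝ 1 (fun x : ℝ => max x 0 ^ 2) := by
  rw [contDiff_one_iff_deriv]
  constructor
  · exact fun x => (hasDerivAt_maxsq x).differentiableAt
  · have : deriv (fun x : ℝ => max x 0 ^ 2) = fun x => 2 * max x 0 := by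
      funext x; exact (hasDerivAt_maxsq x).deriv
    rw [this]
    exact continuous_const.mul (continuous_id.max continuous_const)

-- F₁ = |w|² = re² + im²
private def Fsq : ℂ → ℝ := fun w => w.re ^ 2 + w.im ^ 2

private lemma Fsq_eq (w : ℂ) : Fsq w = ‖w‖ ^ 2 := by
  rw [Complex.sq_norm, Complex.normSq_apply, Fsq]; ring

private lemma hasFDerivAt_Fsq (w : ℂ) :
    HasFDerivAt Fsq ((2 * w.re) • (Complex.reCLM : ℂ →L[ℝ] ℝ)
      + (2 * w.im) • (Complex.imCLM : ℂ →L[ℝ] ℝ)) w := by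
  have h1 : HasFDerivAt (fun w : ℂ => w.re ^ 2)
      ((2 * w.re) • (Complex.reCLM : ℂ →L[ℝ] ℝ)) w := by
    have := (hasDerivAt_pow 2 (w.re)).comp_hasFDerivAt w (Complex.reCLM.hasFDerivAt (x := w))
    simpa [Function.comp_def] using this
  have h2 : HasFDerivAt (fun w : ℂ => w.im ^ 2)
      ((2 * w.im) • (Complex.imCLM : ℂ →L[ℝ] ℝ)) w := by
    have := (hasDerivAt_pow 2 (w.im)).comp_hasFDerivAt w (Complex.imCLM.hasFDerivAt (x := w))
    simpa [Function.comp_def] using this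
  exact h1.add h2

private lemma contDiff_Fsq : ContDiff ℝ 1 Fsq :=
  ((Complex.reCLM.contDiff (n := 1)).pow 2).add ((Complex.imCLM.contDiff (n := 1)).pow 2)

private lemma re_dot_le (w v : ℂ) : |w.re * v.re + w.im * v.im| ≤ ‖w‖ * ‖v‖ := by
  have h : w.re * v.re + w.im * v.im = (w * (starRingEnd ℂ) v).re := by
    simp [Complex.mul_re, Complex.conj_re, Complex.conj_im]; try ring
  rw [h]
  calc |(w * (starRingEnd ℂ) v).re| ≤ ‖w * (starRingEnd ℂ) v‖ :=
        Complex.abs_re_le_norm _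
    _ = ‖w‖ * ‖v‖ := by rw [norm_mul, Complex.norm_conj]

private lemma Fsq_bound (w v : ℂ) :
    ‖fderiv ℝ Fsq w v‖ ≤ 2 * ‖w‖ * ‖v‖ := by
  rw [(hasFDerivAt_Fsq w).fderiv]
  simp only [ContinuousLinearMap.add_apply, ContinuousLinearMap.coe_smul', Pi.smul_apply,
    Complex.reCLM_apply, Complex.imCLM_apply, smul_eq_mul]
  rw [Real.norm_eq_abs]
  have h := re_dot_le w v
  calc |2 * w.re * v.re + 2 * w.im * v.im| = |2 * (w.re * v.re + w.im * v.im)| := by ring_nf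
    _ = 2 * |w.re * v.re + w.im * v.im| := by rw [abs_mul]; norm_num
    _ ≤ 2 * (‖w‖ * ‖v‖) := by linarith
    _ = 2 * ‖w‖ * ‖v‖ := by ring

-- F₂ = w²
private lemma contDiff_sqc : ContDiff ℝ 1 (fun w : ℂ => w ^ 2) :=
  ((contDiff_id (𝕜 := ℂ)).pow 2).restrict_scalars ℝ

private lemma sqc_bound (w v : ℂ) :
    ‖fderiv ℝ (fun w : ℂ => w ^ 2) w v‖ ≤ 2 * ‖w‖ * ‖v‖ := by
  have h : HasFDerivAt (fun w : ℂ => w ^ 2)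
      (((ContinuousLinearMap.smulRight (1 : ℂ →L[ℂ] ℂ) (2 * w ^ 1))).restrictScalars ℝ) w := by
    exact ((hasDerivAt_pow 2 w).hasFDerivAt).restrictScalars ℝ
  rw [h.fderiv]
  simp only [ContinuousLinearMap.coe_restrictScalars', ContinuousLinearMap.smulRight_apply,
    ContinuousLinearMap.one_apply, pow_one, smul_eq_mul]
  rw [norm_mul, norm_mul]
  simp
  ring_nf
  nlinarith [norm_nonneg w, norm_nonneg v]

-- the linear form ℓ_u
private def ellCLM (u : ℂ) : ℂ →L[ℝ] ℝ :=
  Complex.reCLM.comp ((ContinuousLinearMap.mul ℂ ℂ ((starRingEnd ℂ) u)).restrictScalars ℝ)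

private lemma ellCLM_apply (u v : ℂ) : ellCLM u v = ((starRingEnd ℂ) u * v).re := rfl

/-- The clipped calibration function. -/
private def Fcal (u : ℂ) : ℂ → ℝ :=
  fun w => 2 * max (ellCLM u w) 0 ^ 2 - Fsq w

private lemma contDiff_Fcal (u : ℂ) : ContDiff ℝ 1 (Fcal u) :=
  (contDiff_const.mul (contDiff_maxsq.comp (ellCLM u).contDiff)).sub contDiff_Fsq

private lemma hasFDerivAt_Fcal (u w : ℂ) :
    HasFDerivAt (Fcal u)
      ((2 : ℝ) • ((2 * max (ellCLM u w) 0) • ellCLM u)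
        - ((2 * w.re) • (Complex.reCLM : ℂ →L[ℝ] ℝ)
          + (2 * w.im) • (Complex.imCLM : ℂ →L[ℝ] ℝ))) w := by
  have hcomp : HasFDerivAt (fun w : ℂ => max (ellCLM u w) 0 ^ 2)
      ((2 * max (ellCLM u w) 0) • ellCLM u) w :=
    (hasDerivAt_maxsq (ellCLM u w)).comp_hasFDerivAt w ((ellCLM u).hasFDerivAt)
  exact (hcomp.const_mul (2 : ℝ)).sub (hasFDerivAt_Fsq w)

private lemma key_identity (u w v : ℂ) :
    2 * (((starRingEnd ℂ) u * w).re) * (((starRingEnd ℂ) u * v).re)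
      - (u.re ^ 2 + u.im ^ 2) * (w.re * v.re + w.im * v.im)
    = (w * v * (starRingEnd ℂ) u * (starRingEnd ℂ) u).re := by
  simp [Complex.mul_re, Complex.mul_im, Complex.conj_re, Complex.conj_im]
  ring

private lemma Fcal_bound {u : ℂ} (hu : ‖u‖ = 1) (w v : ℂ) :
    ‖fderiv ℝ (Fcal u) w v‖ ≤ 2 * ‖w‖ * ‖v‖ := by
  rw [(hasFDerivAt_Fcal u w).fderiv]
  have hnorm : u.re ^ 2 + u.im ^ 2 = 1 := by
    have := Complex.sq_norm u
    rw [hu, Complex.normSq_apply] at this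
    nlinarith
  simp only [ContinuousLinearMap.sub_apply, ContinuousLinearMap.add_apply,
    ContinuousLinearMap.coe_smul', Pi.smul_apply, Complex.reCLM_apply, Complex.imCLM_apply,
    smul_eq_mul]
  rw [Real.norm_eq_abs]
  set c := ellCLM u w with hc
  set d := ellCLM u v with hd
  have hdot := re_dot_le w v
  rcases le_or_gt c 0 with hcase | hcase
  · rw [max_eq_right hcase]
    have : |2 * (2 * 0 * d) - (2 * w.re * v.re + 2 * w.im * v.im)|
        = |2 * (w.re * v.re + w.im * v.im)| := by
      rw [show 2 * (2 * 0 * d) - (2 * w.re * v.re + 2 * w.im * v.im)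
          = -(2 * (w.re * v.re + w.im * v.im)) by ring, abs_neg]
    rw [this, abs_mul]
    calc |(2:ℝ)| * |w.re * v.re + w.im * v.im| = 2 * |w.re * v.re + w.im * v.im| := by norm_num
      _ ≤ 2 * (‖w‖ * ‖v‖) := by linarith
      _ = 2 * ‖w‖ * ‖v‖ := by ring
  · rw [max_eq_left hcase.le]
    have hid := key_identity u w v
    rw [ellCLM_apply] at hc hd
    have hval : 2 * (2 * c * d) - (2 * w.re * v.re + 2 * w.im * v.im)
        = 2 * ((w * v * (starRingEnd ℂ) u * (starRingEnd ℂ) u).re) := by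
      rw [← hid, hnorm, hc, hd]; ring
    rw [hval, abs_mul]
    have habs : |(w * v * (starRingEnd ℂ) u * (starRingEnd ℂ) u).re|
        ≤ ‖w‖ * ‖v‖ := by
      calc |(w * v * (starRingEnd ℂ) u * (starRingEnd ℂ) u).re|
          ≤ ‖w * v * (starRingEnd ℂ) u * (starRingEnd ℂ) u‖ :=
            Complex.abs_re_le_norm _
        _ = ‖w‖ * ‖v‖ := by
            rw [norm_mul, norm_mul, norm_mul, Complex.norm_conj, hu]; ring
    calc |(2:ℝ)| * |(w * v * (starRingEnd ℂ) u * (starRingEnd ℂ) u).re|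
        = 2 * |(w * v * (starRingEnd ℂ) u * (starRingEnd ℂ) u).re| := by norm_num
      _ ≤ 2 * (‖w‖ * ‖v‖) := by linarith
      _ = 2 * ‖w‖ * ‖v‖ := by ring

variable {E : Type*} [NormedAddCommGroup E] [NormedSpace ℝ E] [CompleteSpace E]

/-- Key estimate on a single C¹ piece. -/
private lemma piece_bound {F : ℂ → E}
    (hF : ContDiff ℝ 1 F)
    (hb : ∀ w v : ℂ, ‖fderiv ℝ F w v‖ ≤ 2 * ‖w‖ * ‖v‖)
    {γ : ℝ → ℂ} {a b : ℝ} (hab : a < b) (hγ : ContDiffOn ℝ 1 γ (Set.Icc a b)) :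
    ‖F (γ b) - F (γ a)‖ ≤ ∫ t in a..b, 2 * ‖γ t‖ * ‖deriv γ t‖ ∧
      IntervalIntegrable (fun t => 2 * ‖γ t‖ * ‖deriv γ t‖)
        volume a b := by
  set g : ℝ → ℂ := derivWithin γ (Set.Icc a b) with hg_def
  have hγc : ContinuousOn γ (Set.Icc a b) := hγ.continuousOn
  have hg_cont : ContinuousOn g (Set.Icc a b) :=
    hγ.continuousOn_derivWithin (uniqueDiffOn_Icc hab) le_rfl
  have hderiv : ∀ t ∈ Set.Ioo a b, HasDerivAt γ (g t) t := by
    intro t ht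
    have h2 : Set.Icc a b ∈ nhds t := Icc_mem_nhds ht.1 ht.2
    have h3 : DifferentiableAt ℝ γ t :=
      ((hγ.differentiableOn one_ne_zero) t (Set.Ioo_subset_Icc_self ht)).differentiableAt h2
    have h4 : g t = deriv γ t := derivWithin_of_mem_nhds h2
    rw [h4]; exact h3.hasDerivAt
  -- the "smooth" version of the integrand
  set I2 : ℝ → ℝ := fun t => 2 * ‖γ t‖ * ‖g t‖ with hI2_def
  have hI2cont : ContinuousOn I2 (Set.Icc a b) :=
    (continuous_const.continuousOn.mul
      (continuous_norm.comp_continuousOn hγc)).mul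
      (continuous_norm.comp_continuousOn hg_cont)
  have hI2int : IntervalIntegrable I2 volume a b := by
    apply ContinuousOn.intervalIntegrable
    rwa [Set.uIcc_of_le hab.le]
  have heqIoo : ∀ t ∈ Set.Ioo a b,
      2 * ‖γ t‖ * ‖deriv γ t‖ = I2 t := by
    intro t ht
    rw [hI2_def]
    simp only []
    rw [(hderiv t ht).deriv]
  have hint : IntervalIntegrable
      (fun t => 2 * ‖γ t‖ * ‖deriv γ t‖) volume a b :=
    intervalIntegrable_congr_Ioo' hab.le heqIoo hI2int
  have hIeq : ∫ t in a..b, 2 * ‖γ t‖ * ‖deriv γ t‖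
      = ∫ t in a..b, I2 t := integral_congr_Ioo' hab.le heqIoo
  -- FTC
  set D : ℝ → E := fun t => fderiv ℝ F (γ t) (g t) with hD_def
  have hD_cont : ContinuousOn D (Set.Icc a b) :=
    ((hF.continuous_fderiv one_ne_zero).comp_continuousOn hγc).clm_apply hg_cont
  have hD_int : IntervalIntegrable D volume a b := by
    apply ContinuousOn.intervalIntegrable
    rwa [Set.uIcc_of_le hab.le]
  have hFD : ∀ t ∈ Set.Ioo a b, HasDerivAt (fun t => F (γ t)) (D t) t := by
    intro t ht
    exact ((hF.differentiable one_ne_zero (γ t)).hasFDerivAt).comp_hasDerivAt t (hderiv t ht)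
  have hFTC : ∫ t in a..b, D t = F (γ b) - F (γ a) :=
    integral_eq_sub_of_hasDerivAt_of_le hab.le
      (hF.continuous.comp_continuousOn hγc) hFD hD_int
  constructor
  · calc ‖F (γ b) - F (γ a)‖ = ‖∫ t in a..b, D t‖ := by rw [hFTC]
      _ ≤ ∫ t in a..b, ‖D t‖ := intervalIntegral.norm_integral_le_integral_norm hab.le
      _ ≤ ∫ t in a..b, I2 t := by
          apply intervalIntegral.integral_mono_on hab.le hD_int.norm hI2int
          intro t _
          exact hb (γ t) (g t)
      _ = _ := hIeq.symm
  · exact hint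

/-- Master calibration bound. -/
private lemma calib_le_LELength {F : ℂ → E}
    (hF : ContDiff ℝ 1 F)
    (hb : ∀ w v : ℂ, ‖fderiv ℝ F w v‖ ≤ 2 * ‖w‖ * ‖v‖)
    {γ : ℝ → ℂ} (hγ : PiecewiseC1 γ) :
    ‖F (γ 1) - F (γ 0)‖ ≤ LELength γ := by
  show _ ≤ ∫ t in (0:ℝ)..1, 2 * ‖γ t‖ * ‖deriv γ t‖
  obtain ⟨hcont, n, s, hs, hs0, hsn, hpieces⟩ := hγ
  set I : ℝ → ℝ := fun t => 2 * ‖γ t‖ * ‖deriv γ t‖ with hI_def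
  set a : ℕ → ℝ := fun k => s ⟨min k n, Nat.lt_succ_of_le (min_le_right _ _)⟩ with ha_def
  have ha0 : a 0 = 0 := by
    rw [ha_def]; simp only [Nat.zero_min]; rw [← hs0]; rfl
  have han : a n = 1 := by
    rw [ha_def]; simp only [min_self]; rw [← hsn]; rfl
  have hpiece' : ∀ i : ℕ, i < n →
      (a i < a (i+1) ∧ ContDiffOn ℝ 1 γ (Set.Icc (a i) (a (i+1)))) := by
    intro i hi
    have h1 : a i = s (Fin.castSucc ⟨i, hi⟩) := by
      exact congrArg s (Fin.ext (by simp only [Fin.coe_castSucc]; omega))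
    have h2 : a (i+1) = s (Fin.succ ⟨i, hi⟩) := by
      exact congrArg s (Fin.ext (by simp only [Fin.val_succ]; omega))
    refine ⟨?_, ?_⟩
    · rw [h1, h2]; exact hs Fin.castSucc_lt_succ
    · rw [h1, h2]; exact hpieces ⟨i, hi⟩
  have hbnds : ∀ i : ℕ, i < n →
      (dist (F (γ (a i))) (F (γ (a (i+1)))) ≤ ∫ t in (a i)..(a (i+1)), I t ∧
        IntervalIntegrable I volume (a i) (a (i+1))) := by
    intro i hi
    obtain ⟨hlt, hC1⟩ := hpiece' i hi
    obtain ⟨h1, h2⟩ := piece_bound hF hb hlt hC1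
    exact ⟨by rw [dist_eq_norm, norm_sub_rev]; exact h1, h2⟩
  calc ‖F (γ 1) - F (γ 0)‖ = dist (F (γ (a 0))) (F (γ (a n))) := by
        rw [ha0, han, dist_eq_norm, norm_sub_rev]
    _ ≤ ∑ i ∈ Finset.range n, dist (F (γ (a i))) (F (γ (a (i+1)))) :=
        dist_le_range_sum_dist (fun i => F (γ (a i))) n
    _ ≤ ∑ i ∈ Finset.range n, ∫ t in (a i)..(a (i+1)), I t := by
        apply Finset.sum_le_sum
        intro i hi
        exact (hbnds i (Finset.mem_range.mp hi)).1
    _ = ∫ t in (a 0)..(a n), I t :=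
        intervalIntegral.sum_integral_adjacent_intervals
          (fun k hk => (hbnds k hk).2)
    _ = _ := by rw [ha0, han]

private lemma abs_real_smul (r : ℝ) (z : ℂ) :
    ‖r • z‖ = |r| * ‖z‖ := by
  rw [norm_smul, Real.norm_eq_abs]

/-- The broken path A → 0 → B realizing length |A|² + |B|². -/
private lemma path_exists (A B : ℂ) :
    ∃ γ : ℝ → ℂ, PiecewiseC1 γ ∧ γ 0 = A ∧ γ 1 = B ∧
      LELength γ = ‖A‖ ^ 2 + ‖B‖ ^ 2 := by
  set γ : ℝ → ℂ := fun t => if t ≤ 1/2 then (1 - 2*t) • A else (2*t - 1) • B with hγ_def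
  have hcont : Continuous γ := by
    apply Continuous.if_le
    · exact (continuous_const.sub (continuous_const.mul continuous_id)).smul continuous_const
    · exact ((continuous_const.mul continuous_id).sub continuous_const).smul continuous_const
    · exact continuous_id
    · exact continuous_const
    · intro x hx
      rw [hx]
      norm_num
  have hA_smooth : ContDiff ℝ 1 (fun t : ℝ => (1 - 2*t) • A) :=
    (contDiff_const.sub (contDiff_const.mul contDiff_id)).smul contDiff_const
  have hB_smooth : ContDiff ℝ 1 (fun t : ℝ => (2*t - 1) • B) :=
    ((contDiff_const.mul contDiff_id).sub contDiff_const).smul contDiff_const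
  have hγ0 : γ 0 = A := by norm_num [hγ_def]
  have hγ1 : γ 1 = B := by norm_num [hγ_def]
  have hpw : PiecewiseC1 γ := by
    refine ⟨hcont.continuousOn, 2, ![0, 1/2, 1], ?_, ?_, ?_, ?_⟩
    · rw [Fin.strictMono_iff_lt_succ]
      intro i
      fin_cases i <;> norm_num [Matrix.cons_val_two]
    · norm_num
    · norm_num [Fin.last]
    · intro i
      fin_cases i
      · apply hA_smooth.contDiffOn.congr
        intro x hx
        simp only [Fin.succ, Fin.castSucc] at hx
        norm_num at hx
        exact if_pos hx.2
      · apply hB_smooth.contDiffOn.congr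
        intro x hx
        simp only [Fin.succ, Fin.castSucc] at hx
        norm_num at hx
        rcases le_or_gt x (1/2) with hle | hlt
        · have hx2 : x = 1/2 := le_antisymm hle hx.1
          rw [hγ_def]
          simp only [if_pos hle, hx2]
          norm_num
        · exact if_neg (not_le.mpr hlt)
  -- derivative on the two open pieces
  have hd1 : ∀ t : ℝ, t < 1/2 → deriv γ t = (-2 : ℝ) • A := by
    intro t ht
    have hev : γ =ᶠ[nhds t] (fun t => (1 - 2*t) • A) := by
      filter_upwards [Iio_mem_nhds ht] with y hy
      exact if_pos (le_of_lt hy)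
    rw [Filter.EventuallyEq.deriv_eq hev]
    have h1 : HasDerivAt (fun t : ℝ => 1 - 2*t) (-2) t := by
      have := ((hasDerivAt_id t).const_mul (2:ℝ)).const_sub 1
      simpa using this
    have := h1.smul_const A
    exact this.deriv
  have hd2 : ∀ t : ℝ, 1/2 < t → deriv γ t = (2 : ℝ) • B := by
    intro t ht
    have hev : γ =ᶠ[nhds t] (fun t => (2*t - 1) • B) := by
      filter_upwards [Ioi_mem_nhds ht] with y hy
      exact if_neg (not_le.mpr hy)
    rw [Filter.EventuallyEq.deriv_eq hev]
    have h1 : HasDerivAt (fun t : ℝ => 2*t - 1) (2) t := by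
      have := ((hasDerivAt_id t).const_mul (2:ℝ)).sub_const 1
      simpa using this
    have := h1.smul_const B
    exact this.deriv
  refine ⟨γ, hpw, hγ0, hγ1, ?_⟩
  set I : ℝ → ℝ := fun t => 2 * ‖γ t‖ * ‖deriv γ t‖ with hI_def
  set aA := ‖A‖ with haA
  set aB := ‖B‖ with haB
  set g1 : ℝ → ℝ := fun t => 4*aA^2*(1 - 2*t) with hg1
  set g2 : ℝ → ℝ := fun t => 4*aB^2*(2*t - 1) with hg2
  have hIg1 : ∀ x ∈ Set.Ioo (0:ℝ) (1/2), I x = g1 x := by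
    intro x hx
    rw [hI_def]
    simp only []
    rw [hd1 x hx.2]
    have hγx : γ x = (1 - 2*x) • A := if_pos hx.2.le
    rw [hγx, abs_real_smul, abs_real_smul]
    rw [_root_.abs_of_nonneg (by linarith [hx.2] : (0:ℝ) ≤ 1 - 2*x)]
    rw [hg1]
    simp only []
    rw [_root_.abs_of_nonpos (by norm_num : (-2:ℝ) ≤ 0)]
    ring
  have hIg2 : ∀ x ∈ Set.Ioo (1/2:ℝ) 1, I x = g2 x := by
    intro x hx
    rw [hI_def]
    simp only []
    rw [hd2 x hx.1]
    have hγx : γ x = (2*x - 1) • B := if_neg (not_le.mpr hx.1)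
    rw [hγx, abs_real_smul, abs_real_smul]
    rw [_root_.abs_of_nonneg (by linarith [hx.1] : (0:ℝ) ≤ 2*x - 1)]
    rw [hg2]
    simp only []
    rw [_root_.abs_of_nonneg (by norm_num : (0:ℝ) ≤ 2)]
    ring
  have hg1c : Continuous g1 := by fun_prop
  have hg2c : Continuous g2 := by fun_prop
  have hint1 : IntervalIntegrable I volume 0 (1/2) :=
    intervalIntegrable_congr_Ioo' (by norm_num) hIg1 (hg1c.intervalIntegrable _ _)
  have hint2 : IntervalIntegrable I volume (1/2) 1 :=
    intervalIntegrable_congr_Ioo' (by norm_num) hIg2 (hg2c.intervalIntegrable _ _)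
  have hval1 : ∫ t in (0:ℝ)..(1/2), I t = aA^2 := by
    rw [integral_congr_Ioo' (by norm_num) hIg1]
    have hanti : ∀ t ∈ Set.uIcc (0:ℝ) (1/2), HasDerivAt (fun t : ℝ => 4*aA^2*(t - t^2)) (g1 t) t := by
      intro t _
      have h1 := ((hasDerivAt_id t).sub (hasDerivAt_pow 2 t)).const_mul (4*aA^2)
      rw [hg1]
      simpa using h1
    rw [intervalIntegral.integral_eq_sub_of_hasDerivAt hanti (hg1c.intervalIntegrable _ _)]
    norm_num
    try ring
  have hval2 : ∫ t in (1/2:ℝ)..1, I t = aB^2 := by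
    rw [integral_congr_Ioo' (by norm_num) hIg2]
    have hanti : ∀ t ∈ Set.uIcc (1/2:ℝ) 1, HasDerivAt (fun t : ℝ => 4*aB^2*(t^2 - t)) (g2 t) t := by
      intro t _
      have h1 := ((hasDerivAt_pow 2 t).sub (hasDerivAt_id t)).const_mul (4*aB^2)
      rw [hg2]
      simpa using h1
    rw [intervalIntegral.integral_eq_sub_of_hasDerivAt hanti (hg2c.intervalIntegrable _ _)]
    norm_num
    try ring
  have : LELength γ = (∫ t in (0:ℝ)..(1/2), I t) + ∫ t in (1/2:ℝ)..1, I t := by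
    rw [LELength]
    exact (intervalIntegral.integral_add_adjacent_intervals hint1 hint2).symm
  rw [this, hval1, hval2]

-- ### dLE level lemmas

private lemma dLE_bddBelow (A B : ℂ) :
    BddBelow {L : ℝ | ∃ γ : ℝ → ℂ, PiecewiseC1 γ ∧ γ 0 = A ∧ γ 1 = B ∧ LELength γ = L} := by
  refine ⟨0, ?_⟩
  rintro L ⟨γ, hγ, h0, h1, rfl⟩
  exact intervalIntegral.integral_nonneg (by norm_num) (fun u _ => by positivity)

private lemma dLE_le_sum (A B : ℂ) :
    dLE A B ≤ ‖A‖ ^ 2 + ‖B‖ ^ 2 := by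
  obtain ⟨γ, h1, h2, h3, h4⟩ := path_exists A B
  exact csInf_le (dLE_bddBelow A B) ⟨γ, h1, h2, h3, h4⟩

private lemma calib_le_dLE {E : Type*} [NormedAddCommGroup E] [NormedSpace ℝ E]
    [CompleteSpace E] {F : ℂ → E}
    (hF : ContDiff ℝ 1 F)
    (hb : ∀ w v : ℂ, ‖fderiv ℝ F w v‖ ≤ 2 * ‖w‖ * ‖v‖)
    (A B : ℂ) : ‖F B - F A‖ ≤ dLE A B := by
  apply le_csInf
  · obtain ⟨γ, h1, h2, h3, _⟩ := path_exists A B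
    exact ⟨_, γ, h1, h2, h3, rfl⟩
  · rintro L ⟨γ, hγ, h0, h1, rfl⟩
    have := calib_le_LELength hF hb hγ
    rwa [h0, h1] at this

private lemma chord_le_dLE (X Y : ℂ) : ‖Y ^ 2 - X ^ 2‖ ≤ dLE X Y := by
  have := calib_le_dLE contDiff_sqc sqc_bound X Y
  exact this

private lemma radial_le_dLE (X Y : ℂ) :
    |‖Y‖ ^ 2 - ‖X‖ ^ 2| ≤ dLE X Y := by
  have := calib_le_dLE contDiff_Fsq Fsq_bound X Y
  rwa [Real.norm_eq_abs, Fsq_eq, Fsq_eq] at this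

private lemma sum_le_dLE {X Y : ℂ} (h : (X * (starRingEnd ℂ) Y).re ≤ 0) :
    ‖X‖ ^ 2 + ‖Y‖ ^ 2 ≤ dLE X Y := by
  rcases eq_or_ne Y 0 with rfl | hY
  · have := radial_le_dLE X 0
    simp only [norm_zero] at this ⊢
    rw [show ((0:ℝ)) ^ 2 = 0 by norm_num, zero_sub, abs_neg,
      _root_.abs_of_nonneg (by positivity)] at this
    calc ‖X‖ ^ 2 + (0:ℝ) ^ 2 = ‖X‖ ^ 2 := by ring
      _ ≤ dLE X 0 := this
  · have haY : 0 < ‖Y‖ := norm_pos_iff.mpr hY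
    set u : ℂ := ((‖Y‖)⁻¹ : ℝ) • Y with hu_def
    have hu : ‖u‖ = 1 := by
      rw [hu_def, abs_real_smul, abs_inv, _root_.abs_of_nonneg haY.le]
      field_simp
    have hconj : (starRingEnd ℂ) u = ((‖Y‖)⁻¹ : ℝ) • (starRingEnd ℂ) Y := by
      rw [hu_def]
      simp [Complex.real_smul, map_mul, Complex.conj_ofReal]
    have hellY : ellCLM u Y = ‖Y‖ := by
      rw [ellCLM_apply, hconj]
      rw [Complex.real_smul, mul_assoc]
      have : (starRingEnd ℂ) Y * Y = ((Complex.normSq Y : ℝ) : ℂ) := by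
        rw [mul_comm, Complex.mul_conj]
      rw [this]
      simp only [← Complex.ofReal_mul, Complex.ofReal_re]
      rw [← Complex.sq_norm]
      field_simp
    have hellX : ellCLM u X ≤ 0 := by
      rw [ellCLM_apply, hconj]
      rw [Complex.real_smul, mul_assoc]
      have : ((((‖Y‖)⁻¹ : ℝ) : ℂ) * ((starRingEnd ℂ) Y * X)).re
          = (‖Y‖)⁻¹ * ((starRingEnd ℂ) Y * X).re := by
        simp [Complex.mul_re]
      rw [this]
      apply mul_nonpos_of_nonneg_of_nonpos (by positivity)
      rw [mul_comm]
      exact h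
    have hFY : Fcal u Y = ‖Y‖ ^ 2 := by
      rw [Fcal, hellY, max_eq_left haY.le, Fsq_eq]
      ring
    have hFX : Fcal u X = -(‖X‖ ^ 2) := by
      rw [Fcal, max_eq_right hellX, Fsq_eq]
      ring
    have := calib_le_dLE (contDiff_Fcal u) (Fcal_bound hu) X Y
    rw [hFY, hFX, Real.norm_eq_abs] at this
    rw [sub_neg_eq_add, _root_.abs_of_nonneg (by positivity)] at this
    linarith

private lemma algebra_pos {a b : ℂ} (ha : 0 < a.re) (hb : 0 < b.re)
    (ha2 : 0 < (a ^ 2).re) (hb2 : 0 < (b ^ 2).re) : 0 < (a * b).re := by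
  have h1 : (a ^ 2).re = a.re ^ 2 - a.im ^ 2 := by rw [pow_two, Complex.mul_re]; ring
  have h2 : (b ^ 2).re = b.re ^ 2 - b.im ^ 2 := by rw [pow_two, Complex.mul_re]; ring
  have ha2' : a.im ^ 2 < a.re ^ 2 := by linarith
  have hb2' : b.im ^ 2 < b.re ^ 2 := by linarith
  have ea : |a.im| < a.re := abs_lt.mpr ⟨by nlinarith, by nlinarith⟩
  have eb : |b.im| < b.re := abs_lt.mpr ⟨by nlinarith, by nlinarith⟩
  have h6 : a.im * b.im ≤ |a.im| * |b.im| := by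
    calc a.im * b.im ≤ |a.im * b.im| := le_abs_self _
      _ = |a.im| * |b.im| := abs_mul _ _
  have h7 : |a.im| * |b.im| < a.re * b.re := mul_lt_mul'' ea eb (abs_nonneg _) (abs_nonneg _)
  rw [Complex.mul_re]
  linarith

/-- If `Re(A·conj B) ≤ 0`, the ramification point `0` lies metrically between
`A` and `B`, and every geodesic from `A` to `B` passes through `0`. -/
theorem zero_between_of_re_nonpos (A B : ℂ) (h : (A * (starRingEnd ℂ) B).re ≤ 0) :
    dLE A 0 + dLE 0 B = dLE A B ∧
    ∀ γ : ℝ → ℂ, IsLEGeodesic A B γ → ∃ t ∈ Set.Icc (0:ℝ) (dLE A B), γ t = 0 := by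
  have hA0 : dLE A 0 = ‖A‖ ^ 2 := by
    apply le_antisymm
    · have := dLE_le_sum A 0
      simpa using this
    · have := radial_le_dLE A 0
      simp only [norm_zero] at this
      rwa [zero_pow (by norm_num), zero_sub, abs_neg,
        _root_.abs_of_nonneg (by positivity)] at this
  have h0B : dLE 0 B = ‖B‖ ^ 2 := by
    apply le_antisymm
    · have := dLE_le_sum 0 B
      simpa using this
    · have := radial_le_dLE 0 B
      simp only [norm_zero] at this
      rwa [zero_pow (by norm_num), sub_zero,
        _root_.abs_of_nonneg (by positivity)] at this
  have hAB : dLE A B = ‖A‖ ^ 2 + ‖B‖ ^ 2 :=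
    le_antisymm (dLE_le_sum A B) (sum_le_dLE h)
  constructor
  · rw [hA0, h0B, hAB]
  · intro γ hgeo
    obtain ⟨hg0, hg1, hgdist⟩ := hgeo
    set d := dLE A B with hd_def
    set t₀ : ℝ := ‖A‖ ^ 2 with ht₀_def
    have hd : d = ‖A‖ ^ 2 + ‖B‖ ^ 2 := hAB
    have ht₀ : t₀ ∈ Set.Icc (0:ℝ) d := ⟨by positivity, by rw [hd]; nlinarith [sq_nonneg (‖B‖)]⟩
    have h0mem : (0:ℝ) ∈ Set.Icc (0:ℝ) d := ⟨le_refl 0, by rw [hd]; positivity⟩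
    have hdmem : d ∈ Set.Icc (0:ℝ) d := ⟨by rw [hd]; positivity, le_refl d⟩
    refine ⟨t₀, ht₀, ?_⟩
    by_contra hP
    set P : ℂ := γ t₀ with hP_def
    have hAP : dLE A P = ‖A‖ ^ 2 := by
      have := hgdist 0 h0mem t₀ ht₀
      rw [hg0] at this
      rw [this, zero_sub, abs_neg, _root_.abs_of_nonneg (by positivity)]
    have hPB : dLE P B = ‖B‖ ^ 2 := by
      have := hgdist t₀ ht₀ d hdmem
      rw [hg1] at this
      rw [this, _root_.abs_of_nonpos (by rw [hd]; nlinarith [sq_nonneg (‖B‖)]), hd]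
      ring
    have hPpos : 0 < ‖P‖ := norm_pos_iff.mpr hP
    -- step 1 : angles to P are acute
    have haP : 0 < (A * (starRingEnd ℂ) P).re := by
      by_contra hcon
      push_neg at hcon
      have := sum_le_dLE hcon
      rw [hAP] at this
      nlinarith
    have hbP : 0 < (P * (starRingEnd ℂ) B).re := by
      by_contra hcon
      push_neg at hcon
      have := sum_le_dLE hcon
      rw [hPB] at this
      nlinarith
    -- step 2 : chord bounds give positivity of the squared inner products
    have hchordA : ‖P ^ 2 - A ^ 2‖ ≤ ‖A‖ ^ 2 := by
      have := chord_le_dLE A P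
      rwa [hAP] at this
    have hchordB : ‖B ^ 2 - P ^ 2‖ ≤ ‖B‖ ^ 2 := by
      have := chord_le_dLE P B
      rwa [hPB] at this
    set a : ℂ := A * (starRingEnd ℂ) P with ha_def
    set b : ℂ := P * (starRingEnd ℂ) B with hb_def
    have hsqA : 0 < (a ^ 2).re := by
      have h1 : Complex.normSq (P ^ 2 - A ^ 2) ≤ Complex.normSq (A ^ 2) := by
        rw [← Complex.sq_norm, ← Complex.sq_norm]
        have h2 : ‖A ^ 2‖ = ‖A‖ ^ 2 := by rw [norm_pow]
        nlinarith [norm_nonneg (P ^ 2 - A ^ 2), norm_nonneg (A ^ 2)]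
      rw [Complex.normSq_sub] at h1
      have h3 : (0:ℝ) < Complex.normSq (P ^ 2) := by
        rw [← Complex.sq_norm, norm_pow]
        positivity
      have h4 : a ^ 2 = P ^ 2 * (starRingEnd ℂ) (A ^ 2) ∨
          (a ^ 2).re = (P ^ 2 * (starRingEnd ℂ) (A ^ 2)).re := by
        right
        rw [ha_def]
        simp [Complex.mul_re, Complex.mul_im, Complex.conj_re, Complex.conj_im, pow_two]
        ring
      rcases h4 with h4 | h4 <;> rw [h4] <;> linarith
    have hsqB : 0 < (b ^ 2).re := by
      have h1 : Complex.normSq (B ^ 2 - P ^ 2) ≤ Complex.normSq (B ^ 2) := by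
        rw [← Complex.sq_norm, ← Complex.sq_norm]
        have h2 : ‖B ^ 2‖ = ‖B‖ ^ 2 := by rw [norm_pow]
        nlinarith [norm_nonneg (B ^ 2 - P ^ 2), norm_nonneg (B ^ 2)]
      rw [Complex.normSq_sub] at h1
      have h3 : (0:ℝ) < Complex.normSq (P ^ 2) := by
        rw [← Complex.sq_norm, norm_pow]
        positivity
      have h4 : (b ^ 2).re = (B ^ 2 * (starRingEnd ℂ) (P ^ 2)).re := by
        rw [hb_def]
        simp [Complex.mul_re, Complex.mul_im, Complex.conj_re, Complex.conj_im, pow_two]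
        ring
      rw [h4]; linarith
    have hpos : 0 < (a * b).re := algebra_pos haP hbP hsqA hsqB
    have hmul : (a * b).re = (A * (starRingEnd ℂ) B).re * Complex.normSq P := by
      have h5 : a * b = (A * (starRingEnd ℂ) B) * ((Complex.normSq P : ℝ) : ℂ) := by
        rw [ha_def, hb_def, ← Complex.mul_conj]
        ring
      rw [h5, Complex.mul_re]
      simp [Complex.ofReal_re, Complex.ofReal_im]
    have hP2 : 0 < Complex.normSq P := by
      rw [← Complex.sq_norm]; positivity
    nlinarith [mul_nonpos_of_nonpos_of_nonneg h hP2.le]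

end LEProofAux
end

section
/- Hilbert's Theorem 1 fails in the log-euclidean plane: there exist two distinct log-euclidean lines L₁ ≠ L₂ whose intersection L₁ ∩ L₂ contains the half-line {t ∈ ℂ : t real, t ≥ 0}; in particular L₁ ∩ L₂ is an infinite set. -/
open Complex Set

/-- A log-euclidean line: either (i) a connected component of the preimage under
`w ↦ w²` of an affine real line not through `0`, or (ii) the union of two closed
half-lines from `0` in distinct unit directions. -/
def IsLogLine (L : Set ℂ) : Prop :=
  (∃ p v : ℂ, v ≠ 0 ∧ (0 : ℂ) ∉ {z : ℂ | ∃ t : ℝ, z = p + t • v} ∧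
    ∃ w : ℂ, w ^ 2 ∈ {z : ℂ | ∃ t : ℝ, z = p + t • v} ∧
      L = connectedComponentIn {w : ℂ | w ^ 2 ∈ {z : ℂ | ∃ t : ℝ, z = p + t • v}} w) ∨
  (∃ u v : ℂ, u ≠ v ∧ ‖u‖ = 1 ∧ ‖v‖ = 1 ∧
    L = {z : ℂ | ∃ t : ℝ, 0 ≤ t ∧ z = t • u} ∪ {z : ℂ | ∃ t : ℝ, 0 ≤ t ∧ z = t • v})

/-- Hilbert's Theorem 1 fails in the log-euclidean plane: two distinct
log-euclidean lines can share a whole half-line, hence infinitely many points. -/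
theorem logLines_intersection_infinite :
    ∃ L₁ L₂ : Set ℂ, IsLogLine L₁ ∧ IsLogLine L₂ ∧ L₁ ≠ L₂ ∧
      {z : ℂ | ∃ t : ℝ, 0 ≤ t ∧ z = (t : ℂ)} ⊆ L₁ ∩ L₂ ∧ (L₁ ∩ L₂).Infinite := by
  set L₁ : Set ℂ := {z : ℂ | ∃ t : ℝ, 0 ≤ t ∧ z = t • (1 : ℂ)} ∪
    {z : ℂ | ∃ t : ℝ, 0 ≤ t ∧ z = t • Complex.I} with hL₁
  set L₂ : Set ℂ := {z : ℂ | ∃ t : ℝ, 0 ≤ t ∧ z = t • (1 : ℂ)} ∪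
    {z : ℂ | ∃ t : ℝ, 0 ≤ t ∧ z = t • (-1 : ℂ)} with hL₂
  have hsub : {z : ℂ | ∃ t : ℝ, 0 ≤ t ∧ z = (t : ℂ)} ⊆ L₁ ∩ L₂ := by
    rintro z ⟨t, ht, rfl⟩
    constructor <;> exact Or.inl ⟨t, ht, by simp⟩
  refine ⟨L₁, L₂, ?_, ?_, ?_, hsub, ?_⟩
  · exact Or.inr ⟨1, Complex.I, by simp [Complex.ext_iff], by simp, by simp, rfl⟩
  · exact Or.inr ⟨1, -1, by norm_num, by simp, by simp, rfl⟩
  · intro h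
    have hI : Complex.I ∈ L₁ := Or.inr ⟨1, zero_le_one, by simp⟩
    rw [h] at hI
    rcases hI with ⟨t, ht, htI⟩ | ⟨t, ht, htI⟩ <;>
    · have := congrArg Complex.im htI
      simp at this
  · apply Set.Infinite.mono hsub
    apply Set.infinite_of_injective_forall_mem (f := fun n : ℕ => (n : ℂ))
    · intro a b hab
      simpa using hab
    · intro n
      exact ⟨n, n.cast_nonneg, by simp⟩
end

section
/- The log-euclidean plane is not isometric to the euclidean plane; concretely, there exist three pairwise distinct points A, B, C ∈ ℂ with dLE(0, A) = dLE(0, B) = dLE(0, C) = 1 and dLE(A, B) = dLE(B, C) = dLE(A, C) = 2, whereas in the euclidean plane at most two points on the unit circle around a given point can be pairwise at distance 2. -/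
open Complex Set

open MeasureTheory intervalIntegral Filter

namespace LogEuclideanAux

lemma exists_piece {n : ℕ} {s : Fin (n+1) → ℝ} (hs : StrictMono s)
    {x : ℝ} (h0 : s 0 ≤ x) (h1 : x < s (Fin.last n)) :
    ∃ i : Fin n, s i.castSucc ≤ x ∧ x < s i.succ := by
  classical
  set T : Finset (Fin (n+1)) := Finset.univ.filter (fun j => s j ≤ x) with hT
  have hne : T.Nonempty := ⟨0, by simp [hT, h0]⟩
  set j := T.max' hne with hj
  have hjmem : j ∈ T := T.max'_mem hne
  have hjx : s j ≤ x := by simpa [hT] using hjmem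
  have hjlt : (j : ℕ) < n := by
    rcases lt_or_eq_of_le (Nat.lt_succ_iff.mp j.isLt) with h | h
    · exact h
    · exfalso
      have : j = Fin.last n := by ext; simpa using h
      rw [this] at hjx; exact absurd (lt_of_le_of_lt hjx h1) (lt_irrefl _)
  refine ⟨⟨(j : ℕ), hjlt⟩, ?_, ?_⟩
  · have : (Fin.castSucc ⟨(j : ℕ), hjlt⟩) = j := by ext; simp
    rw [this]; exact hjx
  · by_contra h
    push_neg at h
    rw [Fin.succ_mk] at h
    have hmem : (Fin.succ ⟨(j : ℕ), hjlt⟩) ∈ T := by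
      rw [hT]
      simp only [Finset.mem_filter, Finset.mem_univ, true_and]
      rw [Fin.succ_mk]
      exact h
    have := T.le_max' _ hmem
    rw [← hj] at this
    have : ((j:ℕ) + 1 : ℕ) ≤ (j : ℕ) := by exact_mod_cast this
    omega

lemma lel_nonneg (γ : ℝ → ℂ) : 0 ≤ LELength γ :=
  intervalIntegral.integral_nonneg zero_le_one (fun u _ => by positivity)

/-- Key lower bound: the log-euclidean length dominates the broken displacement
of the squared path through any intermediate time `c`. -/
lemma key_lower (γ : ℝ → ℂ) (hγ : PiecewiseC1 γ) {c : ℝ} (hc : c ∈ Icc (0:ℝ) 1) :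
    ‖γ c ^ 2 - γ 0 ^ 2‖ + ‖γ 1 ^ 2 - γ c ^ 2‖ ≤ LELength γ := by
  obtain ⟨hcont, n, s, hs, hs0, hsl, hC⟩ := hγ
  set f : ℝ → ℂ := fun t => γ t ^ 2 with hf
  set φ : ℝ → ℂ := fun x => derivWithin f (Ici x) x with hφ
  set g : ℝ → ℝ := fun t => 2 * ‖γ t‖ * ‖deriv γ t‖ with hg
  -- Step A : right derivatives everywhere on [0,1)
  have hder : ∀ x ∈ Ico (0:ℝ) 1, HasDerivWithinAt f (φ x) (Ici x) x := by
    intro x hx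
    obtain ⟨i, hix, hxi⟩ := exists_piece hs (hs0 ▸ hx.1) (hsl ▸ hx.2)
    have hmem : Icc (s i.castSucc) (s i.succ) ∈ nhdsWithin x (Ici x) := by
      have h1 : Ico x (s i.succ) ∈ nhdsWithin x (Ici x) :=
        Ico_mem_nhdsGE hxi
      exact Filter.mem_of_superset h1 (fun y hy => ⟨le_trans hix hy.1, le_of_lt hy.2⟩)
    have hd : DifferentiableWithinAt ℝ γ (Icc (s i.castSucc) (s i.succ)) x :=
      ((hC i).differentiableOn one_ne_zero) x ⟨hix, le_of_lt hxi⟩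
    have hγd : HasDerivWithinAt γ (derivWithin γ (Icc (s i.castSucc) (s i.succ)) x) (Ici x) x :=
      (hd.hasDerivWithinAt).mono_of_mem_nhdsWithin hmem
    set D := derivWithin γ (Icc (s i.castSucc) (s i.succ)) x with hD
    have hfd : HasDerivWithinAt f (2 * γ x * D) (Ici x) x := by
      have h2 := hγd.mul hγd
      have hfun : (fun y => γ y * γ y) = f := by funext y; rw [hf]; ring
      rw [show γ * γ = f from hfun] at h2
      rw [show (2:ℂ) * γ x * D = D * γ x + γ x * D by ring]
      exact h2
    have huniq : UniqueDiffWithinAt ℝ (Ici x) x := uniqueDiffOn_Ici x x Set.self_mem_Ici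
    have heq := hfd.derivWithin huniq
    rw [show φ x = 2 * γ x * D from heq]
    exact hfd
  -- Step B : pointwise identities on the interiors of the pieces
  set G : Set ℝ := ⋃ i : Fin n, Ioo (s i.castSucc) (s i.succ) with hG
  have hBpt : ∀ x ∈ G, DifferentiableAt ℝ γ x ∧ φ x = 2 * γ x * deriv γ x := by
    intro x hxG
    obtain ⟨i, hxi⟩ := Set.mem_iUnion.mp hxG
    have hnx : Icc (s i.castSucc) (s i.succ) ∈ nhds x := Icc_mem_nhds hxi.1 hxi.2
    have hdw : DifferentiableWithinAt ℝ γ (Icc (s i.castSucc) (s i.succ)) x :=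
      ((hC i).differentiableOn one_ne_zero) x (Ioo_subset_Icc_self hxi)
    have hdiff : DifferentiableAt ℝ γ x := hdw.differentiableAt hnx
    have hfAt : HasDerivAt f (2 * γ x * deriv γ x) x := by
      have h2 := hdiff.hasDerivAt.mul hdiff.hasDerivAt
      have hfun : (fun y => γ y * γ y) = f := by funext y; rw [hf]; ring
      rw [show γ * γ = f from hfun] at h2
      rw [show (2:ℂ) * γ x * deriv γ x = deriv γ x * γ x + γ x * deriv γ x by ring]
      exact h2
    have hφeq : φ x = 2 * γ x * deriv γ x :=
      hfAt.hasDerivWithinAt.derivWithin (uniqueDiffOn_Ici x x Set.self_mem_Ici)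
    exact ⟨hdiff, hφeq⟩
  -- a.e. every point of (0,1] is in G
  have hGae : ∀ᵐ x : ℝ ∂volume, x ∈ Ioc (0:ℝ) 1 → x ∈ G := by
    have hsub : {x : ℝ | ¬ (x ∈ Ioc (0:ℝ) 1 → x ∈ G)} ⊆ Set.range s := by
      intro x hx
      simp only [Set.mem_setOf_eq, Classical.not_imp] at hx
      obtain ⟨hx01, hxG⟩ := hx
      by_contra hxr
      apply hxG
      have hx1 : x < 1 := by
        rcases lt_or_eq_of_le hx01.2 with h | h
        · exact h
        · have hmem : x ∈ Set.range s := ⟨Fin.last n, hsl.trans h.symm⟩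
          exact absurd hmem hxr
      obtain ⟨i, hix, hxi⟩ := exists_piece hs (hs0 ▸ le_of_lt hx01.1) (hsl ▸ hx1)
      have : s i.castSucc < x := by
        rcases lt_or_eq_of_le hix with h | h
        · exact h
        · exact absurd ⟨i.castSucc, h⟩ hxr
      rw [hG]
      exact Set.mem_iUnion.mpr ⟨i, Set.mem_Ioo.mpr ⟨this, hxi⟩⟩
    exact ae_iff.mpr (measure_mono_null hsub ((Set.finite_range s).measure_zero _))
  -- Step C : interval integrability of φ on [0,1]
  have hintpiece : ∀ i : Fin n, IntervalIntegrable φ volume (s i.castSucc) (s i.succ) := by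
    intro i
    have hlt : s i.castSucc < s i.succ := hs (Fin.castSucc_lt_succ (i := i))
    have hfC : ContDiffOn ℝ 1 f (Icc (s i.castSucc) (s i.succ)) := by
      have := (hC i).mul (hC i)
      have hfun : (fun y => γ y * γ y) = f := by funext y; rw [hf]; ring
      rwa [hfun] at this
    have hψc : ContinuousOn (derivWithin f (Icc (s i.castSucc) (s i.succ)))
        (Icc (s i.castSucc) (s i.succ)) :=
      hfC.continuousOn_derivWithin (uniqueDiffOn_Icc hlt) le_rfl
    have hψint : IntervalIntegrable (derivWithin f (Icc (s i.castSucc) (s i.succ)))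
        volume (s i.castSucc) (s i.succ) :=
      (hψc.mono (by rw [uIcc_of_le hlt.le])).intervalIntegrable
    rw [intervalIntegrable_iff_integrableOn_Ioc_of_le hlt.le] at hψint ⊢
    refine hψint.congr_fun_ae ?_
    rw [Filter.EventuallyEq, ae_restrict_iff' measurableSet_Ioc]
    have hbad : {x : ℝ | ¬ (x ∈ Ioc (s i.castSucc) (s i.succ) →
        derivWithin f (Icc (s i.castSucc) (s i.succ)) x = φ x)} ⊆ {s i.succ} := by
      intro x hx
      simp only [Set.mem_setOf_eq, Classical.not_imp] at hx
      obtain ⟨hx1, hx2⟩ := hx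
      by_contra hxe
      apply hx2
      have hxIoo : x ∈ Ioo (s i.castSucc) (s i.succ) :=
        ⟨hx1.1, lt_of_le_of_ne hx1.2 (by simpa using hxe)⟩
      have hnx : Icc (s i.castSucc) (s i.succ) ∈ nhds x := Icc_mem_nhds hxIoo.1 hxIoo.2
      have hdw : DifferentiableWithinAt ℝ γ (Icc (s i.castSucc) (s i.succ)) x :=
        ((hC i).differentiableOn one_ne_zero) x (Ioo_subset_Icc_self hxIoo)
      have hdiff : DifferentiableAt ℝ γ x := hdw.differentiableAt hnx
      have hfAt : HasDerivAt f (2 * γ x * deriv γ x) x := by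
        have h2 := hdiff.hasDerivAt.mul hdiff.hasDerivAt
        have hfun : (fun y => γ y * γ y) = f := by funext y; rw [hf]; ring
        rw [show γ * γ = f from hfun] at h2
        rw [show (2:ℂ) * γ x * deriv γ x = deriv γ x * γ x + γ x * deriv γ x by ring]
        exact h2
      have h1 : derivWithin f (Icc (s i.castSucc) (s i.succ)) x = 2 * γ x * deriv γ x :=
        (hfAt.hasDerivWithinAt).derivWithin ((uniqueDiffOn_Icc hlt) x (Ioo_subset_Icc_self hxIoo))
      have h2 : φ x = 2 * γ x * deriv γ x :=
        hfAt.hasDerivWithinAt.derivWithin (uniqueDiffOn_Ici x x Set.self_mem_Ici)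
      rw [h1, h2]
    exact ae_iff.mpr (measure_mono_null hbad (measure_singleton _))
  have hint01 : IntervalIntegrable φ volume 0 1 := by
    have hchain : ∀ j : Fin (n+1), IntervalIntegrable φ volume (s 0) (s j) := by
      intro j
      induction j using Fin.induction with
      | zero => exact IntervalIntegrable.refl
      | succ i ih => exact ih.trans (hintpiece i)
    have := hchain (Fin.last n)
    rwa [hs0, hsl] at this
  -- a.e. ‖φ‖ = g on (0,1]
  have hφg : ∀ᵐ x : ℝ ∂volume, x ∈ Ioc (0:ℝ) 1 → ‖φ x‖ = g x := by
    refine hGae.mono (fun x hx hx1 => ?_)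
    obtain ⟨_, hφeq⟩ := hBpt x (hx hx1)
    rw [hφeq]
    have : ‖(2:ℂ) * γ x * deriv γ x‖ = 2 * ‖γ x‖ * ‖deriv γ x‖ := by
      simp [norm_mul]
    rw [this]
  -- Step E : displacement bound on subintervals
  have hkey : ∀ a b : ℝ, 0 ≤ a → a ≤ b → b ≤ 1 →
      ‖γ b ^ 2 - γ a ^ 2‖ ≤ ∫ t in a..b, g t := by
    intro a b ha hab hb1
    have hsub : uIcc a b ⊆ uIcc (0:ℝ) 1 := by
      rw [uIcc_of_le hab, uIcc_of_le zero_le_one]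
      exact Icc_subset_Icc ha hb1
    have hφab : IntervalIntegrable φ volume a b := hint01.mono_set hsub
    have hFTC : ∫ y in a..b, φ y = f b - f a := by
      apply integral_eq_sub_of_hasDeriv_right_of_le hab
      · have h1 : ContinuousOn γ (Icc a b) := hcont.mono (Icc_subset_Icc ha hb1)
        have := h1.mul h1
        have hfun : (fun y => γ y * γ y) = f := by funext y; rw [hf]; ring
        rw [← hfun]; exact this
      · intro x hx
        have hx' : x ∈ Ico (0:ℝ) 1 := ⟨le_trans ha hx.1.le, lt_of_lt_of_le hx.2 hb1⟩
        exact (hder x hx').mono Ioi_subset_Ici_self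
      · exact hφab
    have h1 : ‖γ b ^ 2 - γ a ^ 2‖ = ‖∫ y in a..b, φ y‖ := by
      rw [hFTC]
    rw [h1]
    calc ‖∫ y in a..b, φ y‖ ≤ ∫ y in a..b, ‖φ y‖ :=
          intervalIntegral.norm_integral_le_integral_norm hab
      _ = ∫ y in a..b, g y := by
          apply intervalIntegral.integral_congr_ae
          refine hφg.mono (fun x hx hxI => ?_)
          apply hx
          rw [uIoc_of_le hab] at hxI
          exact Ioc_subset_Ioc ha hb1 hxI
  -- g is interval integrable on [0,1]
  have hgint : IntervalIntegrable g volume 0 1 := by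
    rw [intervalIntegrable_iff_integrableOn_Ioc_of_le zero_le_one]
    have h1 : IntegrableOn (fun x => ‖φ x‖) (Ioc (0:ℝ) 1) volume := by
      have := hint01.norm
      rwa [intervalIntegrable_iff_integrableOn_Ioc_of_le zero_le_one] at this
    refine h1.congr_fun_ae ?_
    rw [Filter.EventuallyEq, ae_restrict_iff' measurableSet_Ioc]
    exact hφg
  -- conclude
  have hsplit : LELength γ = (∫ t in (0:ℝ)..c, g t) + ∫ t in c..(1:ℝ), g t := by
    rw [LELength]
    have h1 : IntervalIntegrable g volume 0 c :=
      hgint.mono_set (by rw [uIcc_of_le hc.1, uIcc_of_le zero_le_one]; exact Icc_subset_Icc le_rfl hc.2)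
    have h2 : IntervalIntegrable g volume c 1 :=
      hgint.mono_set (by rw [uIcc_of_le hc.2, uIcc_of_le zero_le_one]; exact Icc_subset_Icc hc.1 le_rfl)
    exact (integral_add_adjacent_intervals h1 h2).symm
  rw [hsplit]
  exact add_le_add (hkey 0 c le_rfl hc.1 hc.2) (hkey c 1 hc.1 hc.2 le_rfl)


lemma dLE_le {A B : ℂ} {γ : ℝ → ℂ} (hγ : PiecewiseC1 γ) (h0 : γ 0 = A) (h1 : γ 1 = B) :
    dLE A B ≤ LELength γ :=
  csInf_le ⟨0, fun _ ⟨δ, _, _, _, hL⟩ => hL ▸ lel_nonneg δ⟩ ⟨γ, hγ, h0, h1, rfl⟩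

lemma le_dLE {A B : ℂ} {m : ℝ} {γ₀ : ℝ → ℂ} (hγ₀ : PiecewiseC1 γ₀) (h00 : γ₀ 0 = A)
    (h01 : γ₀ 1 = B) (h : ∀ γ : ℝ → ℂ, PiecewiseC1 γ → γ 0 = A → γ 1 = B → m ≤ LELength γ) :
    m ≤ dLE A B :=
  le_csInf ⟨LELength γ₀, γ₀, hγ₀, h00, h01, rfl⟩
    (fun _ ⟨γ, hγ, h0, h1, hL⟩ => hL ▸ h γ hγ h0 h1)

lemma fin2_strictMono : StrictMono (![0, 1] : Fin 2 → ℝ) := by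
  rw [Fin.strictMono_iff_lt_succ]
  intro i
  fin_cases i <;> norm_num

lemma piecewise_of_contDiff {γ : ℝ → ℂ} (h : ContDiff ℝ 1 γ) : PiecewiseC1 γ := by
  refine ⟨h.continuous.continuousOn, 1, ![0, 1], fin2_strictMono, rfl, rfl, ?_⟩
  intro i
  exact h.contDiffOn

lemma line_contDiff (A : ℂ) : ContDiff ℝ 1 (fun t : ℝ => (t : ℂ) * A) :=
  Complex.ofRealCLM.contDiff.mul contDiff_const

lemma line_hasDerivAt (A : ℂ) (t : ℝ) : HasDerivAt (fun u : ℝ => (u : ℂ) * A) A t := by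
  have h1 : HasDerivAt (fun u : ℝ => (u : ℂ)) 1 t := by
    simpa using (hasDerivAt_id t).ofReal_comp
  simpa using h1.mul_const A

lemma lel_line (A : ℂ) : LELength (fun t : ℝ => (t : ℂ) * A) = ‖A‖ ^ 2 := by
  unfold LELength
  have h1 : ∀ t ∈ uIcc (0:ℝ) 1,
      2 * ‖(t:ℂ) * A‖ * ‖deriv (fun u : ℝ => (u : ℂ) * A) t‖
        = (2 * ‖A‖ ^ 2) * t := by
    intro t ht
    rw [uIcc_of_le zero_le_one] at ht
    rw [(line_hasDerivAt A t).deriv]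
    rw [norm_mul, Complex.norm_real, Real.norm_eq_abs, _root_.abs_of_nonneg ht.1]
    ring
  rw [intervalIntegral.integral_congr h1, intervalIntegral.integral_const_mul, integral_id]
  ring

lemma dLE_zero {A : ℂ} (hA : ‖A‖ = 1) : dLE 0 A = 1 := by
  have hpc : PiecewiseC1 (fun t : ℝ => (t : ℂ) * A) := piecewise_of_contDiff (line_contDiff A)
  have h00 : (fun t : ℝ => (t : ℂ) * A) 0 = 0 := by simp
  have h01 : (fun t : ℝ => (t : ℂ) * A) 1 = A := by simp
  refine le_antisymm ?_ ?_
  · have := dLE_le hpc h00 h01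
    rwa [lel_line, hA, one_pow] at this
  · refine le_dLE hpc h00 h01 (fun γ hγ h0 h1 => ?_)
    have hk := key_lower γ hγ (c := 0) (left_mem_Icc.mpr zero_le_one)
    rw [h0, h1] at hk
    have : ‖(0:ℂ) ^ 2 - 0 ^ 2‖ + ‖A ^ 2 - 0 ^ 2‖ = 1 := by
      simp [map_pow, hA]
    linarith [hk, this.symm.le]

/-- The corner path from `1` to `I` through `0`. -/
noncomputable def kpath : ℝ → ℂ :=
  fun t => if t ≤ 1/2 then ((1 - 2*t : ℝ) : ℂ) else Complex.I * ((2*t - 1 : ℝ) : ℂ)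

lemma kpath_zero : kpath 0 = 1 := by norm_num [kpath]

lemma kpath_one : kpath 1 = Complex.I := by norm_num [kpath]

lemma kpath_half : kpath (1/2) = 0 := by norm_num [kpath]

lemma c1_contDiff : ContDiff ℝ 1 (fun t : ℝ => ((1 - 2*t : ℝ) : ℂ)) :=
  Complex.ofRealCLM.contDiff.comp (contDiff_const.sub (contDiff_const.mul contDiff_id))

lemma c2_contDiff : ContDiff ℝ 1 (fun t : ℝ => Complex.I * ((2*t - 1 : ℝ) : ℂ)) :=
  contDiff_const.mul
    (Complex.ofRealCLM.contDiff.comp ((contDiff_const.mul contDiff_id).sub contDiff_const))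

lemma fin3_strictMono : StrictMono (![0, 1/2, 1] : Fin 3 → ℝ) := by
  rw [Fin.strictMono_iff_lt_succ]
  intro i
  fin_cases i <;> norm_num [Matrix.cons_val_two, Matrix.vecHead, Matrix.vecTail]

lemma kpath_eq_c1 {t : ℝ} (ht : t ≤ 1/2) : kpath t = ((1 - 2*t : ℝ) : ℂ) := if_pos ht

lemma kpath_eq_c2 {t : ℝ} (ht : 1/2 ≤ t) : kpath t = Complex.I * ((2*t - 1 : ℝ) : ℂ) := by
  rcases lt_or_eq_of_le ht with h | h
  · exact if_neg (not_le.mpr h)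
  · rw [← h, kpath_half]
    norm_num

lemma kpath_piecewise : PiecewiseC1 kpath := by
  constructor
  · apply Continuous.continuousOn
    apply Continuous.if_le (c1_contDiff.continuous) (c2_contDiff.continuous)
      continuous_id continuous_const
    intro x hx
    simp only [id] at hx
    rw [hx]
    norm_num
  · refine ⟨2, ![0, 1/2, 1], fin3_strictMono, rfl, ?_, ?_⟩
    · rfl
    · intro i
      fin_cases i
      · have : ContDiffOn ℝ 1 kpath (Icc (0:ℝ) (1/2)) :=
          c1_contDiff.contDiffOn.congr (fun t ht => kpath_eq_c1 ht.2)
        simpa using this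
      · have : ContDiffOn ℝ 1 kpath (Icc (1/2 : ℝ) 1) :=
          c2_contDiff.contDiffOn.congr (fun t ht => kpath_eq_c2 ht.1)
        simpa using this

lemma kpath_deriv_lt {t : ℝ} (ht : t < 1/2) :
    deriv kpath t = ((-2 : ℝ) : ℂ) := by
  have hev : kpath =ᶠ[nhds t] (fun u : ℝ => ((1 - 2*u : ℝ) : ℂ)) :=
    Filter.eventuallyEq_of_mem (Iio_mem_nhds ht) (fun u hu => kpath_eq_c1 (le_of_lt hu))
  rw [hev.deriv_eq]
  have h1 : HasDerivAt (fun u : ℝ => (1 - 2*u : ℝ)) (-2) t := by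
    simpa using ((hasDerivAt_id t).const_mul (2:ℝ)).const_sub 1
  exact (h1.ofReal_comp).deriv

lemma kpath_deriv_gt {t : ℝ} (ht : 1/2 < t) :
    deriv kpath t = Complex.I * ((2 : ℝ) : ℂ) := by
  have hev : kpath =ᶠ[nhds t] (fun u : ℝ => Complex.I * ((2*u - 1 : ℝ) : ℂ)) :=
    Filter.eventuallyEq_of_mem (Ioi_mem_nhds ht) (fun u hu => kpath_eq_c2 (le_of_lt hu))
  rw [hev.deriv_eq]
  have h1 : HasDerivAt (fun u : ℝ => (2*u - 1 : ℝ)) 2 t := by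
    simpa using ((hasDerivAt_id t).const_mul (2:ℝ)).sub_const 1
  exact ((h1.ofReal_comp).const_mul Complex.I).deriv

lemma kpath_g_left : EqOn (fun t => 2 * ‖kpath t‖ * ‖deriv kpath t‖)
    (fun t => 4*(1 - 2*t)) (Icc (0:ℝ) (1/2)) := by
  intro t ht
  rcases lt_or_eq_of_le ht.2 with h | h
  · simp only
    rw [kpath_deriv_lt h, kpath_eq_c1 (le_of_lt h)]
    simp only [Complex.norm_real, Real.norm_eq_abs]
    rw [_root_.abs_of_nonneg (by linarith : (0:ℝ) ≤ 1 - 2*t),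
      show |(-2 : ℝ)| = 2 by norm_num]
    ring
  · simp only
    rw [h]
    rw [show kpath (1/2 : ℝ) = 0 from kpath_half]
    norm_num

lemma kpath_g_right : EqOn (fun t => 2 * ‖kpath t‖ * ‖deriv kpath t‖)
    (fun t => 4*(2*t - 1)) (Icc (1/2:ℝ) 1) := by
  intro t ht
  rcases lt_or_eq_of_le ht.1 with h | h
  · simp only
    rw [kpath_deriv_gt h, kpath_eq_c2 (le_of_lt h)]
    simp only [norm_mul, Complex.norm_I, Complex.norm_real, Real.norm_eq_abs, one_mul]
    rw [_root_.abs_of_nonneg (by linarith : (0:ℝ) ≤ 2*t - 1),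
      show |(2 : ℝ)| = 2 by norm_num]
    ring
  · simp only
    rw [← h, show kpath (1/2 : ℝ) = 0 from kpath_half]
    norm_num

lemma intervalIntegrable_of_eqOn {f g : ℝ → ℝ} {a b : ℝ} (hab : a ≤ b)
    (h : EqOn g f (Icc a b)) (hf : ContinuousOn f (Icc a b)) :
    IntervalIntegrable g volume a b := by
  rw [intervalIntegrable_iff_integrableOn_Ioc_of_le hab]
  have hfi : IntegrableOn f (Ioc a b) volume := by
    have := (hf.mono (by rw [uIcc_of_le hab] : uIcc a b ⊆ Icc a b)).intervalIntegrable (μ := volume)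
    rwa [intervalIntegrable_iff_integrableOn_Ioc_of_le hab] at this
  refine hfi.congr_fun_ae ?_
  rw [Filter.EventuallyEq, ae_restrict_iff' measurableSet_Ioc]
  exact Filter.Eventually.of_forall (fun x hx => (h (Ioc_subset_Icc_self hx)).symm)

lemma integral_linear_eval (p q a b : ℝ) :
    ∫ t in a..b, (p + q * t) = p * (b - a) + q * ((b^2 - a^2)/2) := by
  have h1 : IntervalIntegrable (fun t : ℝ => q * t) volume a b :=
    (continuous_const.mul continuous_id).intervalIntegrable _ _
  rw [intervalIntegral.integral_add intervalIntegrable_const h1,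
    intervalIntegral.integral_const_mul, integral_id, intervalIntegral.integral_const]
  rw [smul_eq_mul]
  ring

lemma kpath_lel : LELength kpath = 2 := by
  unfold LELength
  have hs1 : ((0:ℝ)) ≤ 1/2 := by norm_num
  have hs2 : ((1:ℝ)/2) ≤ 1 := by norm_num
  have hintL : IntervalIntegrable
      (fun t => 2 * ‖kpath t‖ * ‖deriv kpath t‖) volume 0 (1/2) :=
    intervalIntegrable_of_eqOn hs1 kpath_g_left (by fun_prop)
  have hintR : IntervalIntegrable
      (fun t => 2 * ‖kpath t‖ * ‖deriv kpath t‖) volume (1/2) 1 :=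
    intervalIntegrable_of_eqOn hs2 kpath_g_right (by fun_prop)
  rw [← intervalIntegral.integral_add_adjacent_intervals hintL hintR]
  have hL : ∫ t in (0:ℝ)..(1/2), 2 * ‖kpath t‖ * ‖deriv kpath t‖ = 1 := by
    rw [intervalIntegral.integral_congr (g := fun t => 4*(1 - 2*t))
      (by rw [uIcc_of_le hs1]; exact kpath_g_left)]
    have : (fun t : ℝ => 4*(1 - 2*t)) = fun t : ℝ => 4 + (-8) * t := by funext t; ring
    rw [this, integral_linear_eval]
    norm_num
  have hR : ∫ t in (1/2:ℝ)..1, 2 * ‖kpath t‖ * ‖deriv kpath t‖ = 1 := by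
    rw [intervalIntegral.integral_congr (g := fun t => 4*(2*t - 1))
      (by rw [uIcc_of_le hs2]; exact kpath_g_right)]
    have : (fun t : ℝ => 4*(2*t - 1)) = fun t : ℝ => (-4) + 8 * t := by funext t; ring
    rw [this, integral_linear_eval]
    norm_num
  rw [hL, hR]
  norm_num

lemma deriv_mul_I (γ : ℝ → ℂ) (t : ℝ) :
    deriv (fun u => Complex.I * γ u) t = Complex.I * deriv γ t := by
  by_cases h : DifferentiableAt ℝ γ t
  · exact deriv_const_mul _ h
  · have h2 : ¬ DifferentiableAt ℝ (fun u => Complex.I * γ u) t := by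
      intro hd
      apply h
      have hmul := hd.const_mul (Complex.I⁻¹)
      have hfun : (fun u => Complex.I⁻¹ * (Complex.I * γ u)) = γ := by
        funext u
        rw [← mul_assoc, inv_mul_cancel₀ Complex.I_ne_zero, one_mul]
      rwa [hfun] at hmul
    rw [deriv_zero_of_not_differentiableAt h, deriv_zero_of_not_differentiableAt h2, mul_zero]

lemma lel_mul_I (γ : ℝ → ℂ) : LELength (fun t => Complex.I * γ t) = LELength γ := by
  unfold LELength
  apply intervalIntegral.integral_congr
  intro t _
  show 2 * ‖Complex.I * γ t‖ * ‖deriv (fun u => Complex.I * γ u) t‖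
      = 2 * ‖γ t‖ * ‖deriv γ t‖
  rw [deriv_mul_I]
  simp [norm_mul, Complex.norm_I]

lemma piecewiseC1_mul_I {γ : ℝ → ℂ} (h : PiecewiseC1 γ) :
    PiecewiseC1 (fun t => Complex.I * γ t) := by
  obtain ⟨hc, n, s, hs, h0, h1, hC⟩ := h
  exact ⟨continuousOn_const.mul hc, n, s, hs, h0, h1, fun i => contDiffOn_const.mul (hC i)⟩

lemma dLE_one_I : dLE 1 Complex.I = 2 := by
  refine le_antisymm ?_ ?_
  · have := dLE_le kpath_piecewise kpath_zero kpath_one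
    rwa [kpath_lel] at this
  · refine le_dLE kpath_piecewise kpath_zero kpath_one (fun γ hγ h0 h1 => ?_)
    have hk := key_lower γ hγ (c := 0) (left_mem_Icc.mpr zero_le_one)
    rw [h0, h1] at hk
    have he : ‖(1:ℂ) ^ 2 - 1 ^ 2‖ + ‖Complex.I ^ 2 - 1 ^ 2‖ = 2 := by
      rw [Complex.I_sq, show ((1:ℂ) ^ 2 - 1 ^ 2) = 0 by ring,
        show ((-1 : ℂ) - 1 ^ 2) = -2 by ring]
      simp
    linarith [hk, he.symm.le]

lemma dLE_I_neg_one : dLE Complex.I (-1) = 2 := by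
  have hpc : PiecewiseC1 (fun t => Complex.I * kpath t) := piecewiseC1_mul_I kpath_piecewise
  have h0 : (fun t => Complex.I * kpath t) 0 = Complex.I := by
    show Complex.I * kpath 0 = Complex.I
    rw [kpath_zero, mul_one]
  have h1 : (fun t => Complex.I * kpath t) 1 = -1 := by
    show Complex.I * kpath 1 = -1
    rw [kpath_one, Complex.I_mul_I]
  refine le_antisymm ?_ ?_
  · have := dLE_le hpc h0 h1
    rwa [lel_mul_I, kpath_lel] at this
  · refine le_dLE hpc h0 h1 (fun γ hγ hγ0 hγ1 => ?_)
    have hk := key_lower γ hγ (c := 0) (left_mem_Icc.mpr zero_le_one)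
    rw [hγ0, hγ1] at hk
    have he : ‖Complex.I ^ 2 - Complex.I ^ 2‖
        + ‖(-1:ℂ) ^ 2 - Complex.I ^ 2‖ = 2 := by
      rw [Complex.I_sq]
      norm_num
    linarith [hk, he.symm.le]

lemma line_neg_piecewise : PiecewiseC1 (fun t : ℝ => ((1 - 2*t : ℝ) : ℂ)) :=
  piecewise_of_contDiff c1_contDiff

lemma line_neg_deriv (t : ℝ) :
    deriv (fun u : ℝ => ((1 - 2*u : ℝ) : ℂ)) t = ((-2 : ℝ) : ℂ) := by
  have h1 : HasDerivAt (fun u : ℝ => (1 - 2*u : ℝ)) (-2) t := by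
    simpa using ((hasDerivAt_id t).const_mul (2:ℝ)).const_sub 1
  exact (h1.ofReal_comp).deriv

lemma line_neg_lel : LELength (fun t : ℝ => ((1 - 2*t : ℝ) : ℂ)) = 2 := by
  unfold LELength
  set g : ℝ → ℝ := fun t =>
    2 * ‖((1 - 2*t : ℝ) : ℂ)‖ * ‖deriv (fun u : ℝ => ((1 - 2*u : ℝ) : ℂ)) t‖
    with hg
  have hgeq : ∀ t : ℝ, g t = 4 * |1 - 2*t| := by
    intro t
    rw [hg]
    simp only [line_neg_deriv, Complex.norm_real, Real.norm_eq_abs]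
    rw [show |(-2 : ℝ)| = 2 by norm_num]
    ring
  have hL : EqOn g (fun t => 4*(1 - 2*t)) (Icc (0:ℝ) (1/2)) := by
    intro t ht
    rw [hgeq t, _root_.abs_of_nonneg (by linarith [ht.2] : (0:ℝ) ≤ 1 - 2*t)]
  have hR : EqOn g (fun t => 4*(2*t - 1)) (Icc (1/2:ℝ) 1) := by
    intro t ht
    rw [hgeq t, _root_.abs_of_nonpos (by linarith [ht.1] : (1 - 2*t : ℝ) ≤ 0)]
    ring
  have hs1 : ((0:ℝ)) ≤ 1/2 := by norm_num
  have hs2 : ((1:ℝ)/2) ≤ 1 := by norm_num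
  have hintL : IntervalIntegrable g volume 0 (1/2) :=
    intervalIntegrable_of_eqOn hs1 hL (by fun_prop)
  have hintR : IntervalIntegrable g volume (1/2) 1 :=
    intervalIntegrable_of_eqOn hs2 hR (by fun_prop)
  rw [show (∫ t in (0:ℝ)..1,
      2 * ‖((1 - 2*t : ℝ) : ℂ)‖
        * ‖deriv (fun u : ℝ => ((1 - 2*u : ℝ) : ℂ)) t‖) = ∫ t in (0:ℝ)..1, g t from rfl]
  rw [← intervalIntegral.integral_add_adjacent_intervals hintL hintR]
  have e1 : ∫ t in (0:ℝ)..(1/2), g t = 1 := by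
    rw [intervalIntegral.integral_congr (g := fun t => 4*(1 - 2*t)) (by rw [uIcc_of_le hs1]; exact hL)]
    have : (fun t : ℝ => 4*(1 - 2*t)) = fun t : ℝ => 4 + (-8) * t := by funext t; ring
    rw [this, integral_linear_eval]
    norm_num
  have e2 : ∫ t in (1/2:ℝ)..1, g t = 1 := by
    rw [intervalIntegral.integral_congr (g := fun t => 4*(2*t - 1)) (by rw [uIcc_of_le hs2]; exact hR)]
    have : (fun t : ℝ => 4*(2*t - 1)) = fun t : ℝ => (-4) + 8 * t := by funext t; ring
    rw [this, integral_linear_eval]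
    norm_num
  rw [e1, e2]
  norm_num

lemma dLE_one_neg_one : dLE 1 (-1) = 2 := by
  have h0 : (fun t : ℝ => ((1 - 2*t : ℝ) : ℂ)) 0 = 1 := by norm_num
  have h1 : (fun t : ℝ => ((1 - 2*t : ℝ) : ℂ)) 1 = -1 := by norm_num
  refine le_antisymm ?_ ?_
  · have := dLE_le line_neg_piecewise h0 h1
    rwa [line_neg_lel] at this
  · refine le_dLE line_neg_piecewise h0 h1 (fun γ hγ hγ0 hγ1 => ?_)
    -- find a time where the real part vanishes
    have hre : ContinuousOn (fun t => (γ t).re) (Icc (0:ℝ) 1) :=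
      Complex.continuous_re.comp_continuousOn hγ.1
    have hmem : (0:ℝ) ∈ Icc ((γ 1).re) ((γ 0).re) := by
      rw [hγ0, hγ1]
      norm_num
    obtain ⟨c, hc, hczero⟩ := intermediate_value_Icc' zero_le_one hre hmem
    have hk := key_lower γ hγ hc
    rw [hγ0, hγ1] at hk
    set y : ℝ := (γ c).im with hy
    have hsq : (γ c) ^ 2 = ((-(y^2) : ℝ) : ℂ) := by
      apply Complex.ext
      · simp [pow_two, Complex.mul_re, hczero, hy]
      · simp [pow_two, Complex.mul_im, hczero]
    have ha1 : ‖(γ c) ^ 2 - 1 ^ 2‖ = y^2 + 1 := by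
      rw [hsq, one_pow]
      rw [show ((-(y^2) : ℝ) : ℂ) - 1 = ((-(y^2) - 1 : ℝ) : ℂ) by push_cast; ring]
      rw [Complex.norm_real, Real.norm_eq_abs]
      rw [_root_.abs_of_nonpos (by nlinarith [sq_nonneg y])]
      ring
    have ha2 : ‖(-1 : ℂ) ^ 2 - (γ c) ^ 2‖ = y^2 + 1 := by
      rw [hsq]
      rw [show ((-1 : ℂ)) ^ 2 - ((-(y^2) : ℝ) : ℂ) = ((1 + y^2 : ℝ) : ℂ) by push_cast; ring]
      rw [Complex.norm_real, Real.norm_eq_abs]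
      rw [_root_.abs_of_nonneg (by nlinarith [sq_nonneg y])]
      ring
    rw [ha1, ha2] at hk
    nlinarith [sq_nonneg y]

lemma euclid_pair {P X Y : ℂ} (hX : dist P X = 1) (hY : dist P Y = 1)
    (hXY : dist X Y = 2) : X + Y = 2 * P := by
  have hu : Complex.normSq (X - P) = 1 := by
    rw [Complex.normSq_eq_norm_sq]
    rw [Complex.dist_eq] at hX
    rw [show ‖X - P‖ = ‖P - X‖ from norm_sub_rev X P]
    rw [hX]; norm_num
  have hv : Complex.normSq (Y - P) = 1 := by
    rw [Complex.normSq_eq_norm_sq]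
    rw [Complex.dist_eq] at hY
    rw [show ‖Y - P‖ = ‖P - Y‖ from norm_sub_rev Y P]
    rw [hY]; norm_num
  have huv : Complex.normSq ((X - P) - (Y - P)) = 4 := by
    rw [show (X - P) - (Y - P) = X - Y by ring]
    rw [Complex.normSq_eq_norm_sq, Complex.dist_eq] at *
    rw [hXY]; norm_num
  have hpar : Complex.normSq ((X - P) + (Y - P)) + Complex.normSq ((X - P) - (Y - P))
      = 2 * Complex.normSq (X - P) + 2 * Complex.normSq (Y - P) := by
    simp only [Complex.normSq_apply, Complex.add_re, Complex.add_im, Complex.sub_re,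
      Complex.sub_im]
    ring
  have hzero : Complex.normSq ((X - P) + (Y - P)) = 0 := by
    rw [hu, hv] at hpar
    linarith [hpar, huv]
  have := Complex.normSq_eq_zero.mp hzero
  linear_combination this

end LogEuclideanAux


/-- The log-euclidean plane is not isometric to the euclidean plane: there are
three pairwise distinct points at `dLE`-distance `1` from `0` which are pairwise
at `dLE`-distance `2`, whereas in the euclidean plane at most two points on a
unit circle can be pairwise at distance `2`. -/
theorem logEuclidean_not_euclidean :
    (∃ A B C : ℂ, A ≠ B ∧ B ≠ C ∧ A ≠ C ∧
      dLE 0 A = 1 ∧ dLE 0 B = 1 ∧ dLE 0 C = 1 ∧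
      dLE A B = 2 ∧ dLE B C = 2 ∧ dLE A C = 2) ∧
    (∀ P A B C : ℂ, dist P A = 1 → dist P B = 1 → dist P C = 1 →
      dist A B = 2 → dist B C = 2 → dist A C = 2 → (A = B ∨ B = C ∨ A = C)) := by
  constructor
  · refine ⟨1, Complex.I, -1, ?_, ?_, ?_, ?_, ?_, ?_, ?_, ?_, ?_⟩
    · intro h
      have := congrArg Complex.im h
      simp at this
    · intro h
      have := congrArg Complex.im h
      simp at this
    · intro h
      have := congrArg Complex.re h
      norm_num at this
    · exact LogEuclideanAux.dLE_zero (by simp)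
    · exact LogEuclideanAux.dLE_zero (by simp)
    · exact LogEuclideanAux.dLE_zero (by simp)
    · exact LogEuclideanAux.dLE_one_I
    · exact LogEuclideanAux.dLE_I_neg_one
    · exact LogEuclideanAux.dLE_one_neg_one
  · intro P A B C h1 h2 h3 h4 h5 h6
    have e1 := LogEuclideanAux.euclid_pair h1 h2 h4
    have e2 := LogEuclideanAux.euclid_pair h2 h3 h5
    right; right
    linear_combination e1 - e2
end
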